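/- arXiv:1811.10889 — 4 statements merged into one kernel-verified Lean document; each statement's English description precedes it below -/
import Mathlib

section
/- For every natural number k, gcd(F_{k+3}, L_k) equals 4 if k ≡ 3 (mod 6), equals 2 if k ≡ 0 (mod 6), and equals 1 otherwise. -/
/-- Lucas numbers on naturals: L 0 = 2, L 1 = 1, L (n+2) = L (n+1) + L n. -/
def lucasNat : ℕ → ℤ
  | 0 => 2
  | 1 => 1
  | n + 2 => lucasNat (n + 1) + lucasNat n

/-- Fibonacci sequence extended to all integers via F₋ₙ = (-1)^(n+1) Fₙ. -/
def fibZ (n : ℤ) : ℤ :=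
  if 0 ≤ n then (Nat.fib n.toNat : ℤ) else (-1) ^ (n.natAbs + 1) * Nat.fib n.natAbs

/-- Lucas sequence extended to all integers via L₋ₙ = (-1)^n Lₙ. -/
def lucasZ (n : ℤ) : ℤ :=
  if 0 ≤ n then lucasNat n.toNat else (-1) ^ n.natAbs * lucasNat n.natAbs

/-- Lucas numbers as naturals. -/
def lucasN : ℕ → ℕ
  | 0 => 2
  | 1 => 1
  | n + 2 => lucasN (n + 1) + lucasN n

lemma lucasNat_eq (k : ℕ) : lucasNat k = (lucasN k : ℤ) := by
  induction k using Nat.strong_induction_on with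
  | _ k ih =>
    match k with
    | 0 => rfl
    | 1 => rfl
    | n + 2 =>
      rw [lucasNat, lucasN, ih (n+1) (by omega), ih n (by omega)]
      push_cast
      ring

lemma lucasN_add_fib (k : ℕ) : lucasN k + Nat.fib k = 2 * Nat.fib (k + 1) := by
  induction k using Nat.strong_induction_on with
  | _ k ih =>
    match k with
    | 0 => rfl
    | 1 => rfl
    | n + 2 =>
      have h1 := ih (n+1) (by omega)
      have h2 := ih n (by omega)
      rw [lucasN]
      rw [Nat.fib_add_two, show n+2+1 = (n+1)+2 from rfl, Nat.fib_add_two]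
      omega

lemma fib_add_three (k : ℕ) : Nat.fib (k + 3) = 2 * Nat.fib (k + 1) + Nat.fib k := by
  rw [show k+3 = (k+1)+2 from rfl, Nat.fib_add_two, Nat.fib_add_two]
  omega

lemma gcd_dvd_four (k : ℕ) : Nat.gcd (Nat.fib (k + 3)) (lucasN k) ∣ 4 := by
  have h1 : Nat.gcd (Nat.fib (k + 3)) (lucasN k) ∣ 4 * Nat.fib (k + 1) := by
    have he : Nat.fib (k+3) + lucasN k = 4 * Nat.fib (k+1) := by
      have := lucasN_add_fib k
      have := fib_add_three k
      omega
    exact he ▸ Nat.dvd_add (Nat.gcd_dvd_left _ _) (Nat.gcd_dvd_right _ _)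
  have h2 : Nat.gcd (Nat.fib (k + 3)) (lucasN k) ∣ 4 * Nat.fib k := by
    have he : Nat.fib (k+3) = lucasN k + 2 * Nat.fib k := by
      have := lucasN_add_fib k
      have := fib_add_three k
      omega
    have h : Nat.gcd (Nat.fib (k + 3)) (lucasN k) ∣ 2 * Nat.fib k :=
      (Nat.dvd_add_right (Nat.gcd_dvd_right _ _)).mp (he ▸ Nat.gcd_dvd_left _ _)
    exact h.trans ⟨2, by ring⟩
  have h3 := Nat.dvd_gcd h1 h2
  rwa [Nat.gcd_mul_left, Nat.Coprime.gcd_eq_one ((Nat.fib_coprime_fib_succ k).symm),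
    mul_one] at h3

lemma fib_period (k : ℕ) : Nat.fib (k + 6) % 4 = Nat.fib k % 4 := by
  have h : ∀ n, Nat.fib (n + 2) = Nat.fib n + Nat.fib (n + 1) := fun n => Nat.fib_add_two
  have e1 := h (k+4); have e2 := h (k+3); have e3 := h (k+2); have e4 := h (k+1)
  have e5 := h k
  simp only [show k+4+2 = k+6 from rfl, show k+4+1 = k+5 from rfl,
    show k+3+2 = k+5 from rfl, show k+3+1 = k+4 from rfl,
    show k+2+2 = k+4 from rfl, show k+2+1 = k+3 from rfl,
    show k+1+2 = k+3 from rfl, show k+1+1 = k+2 from rfl] at e1 e2 e3 e4 e5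
  omega

lemma lucasN_period (k : ℕ) : lucasN (k + 6) % 4 = lucasN k % 4 := by
  have h : ∀ n, lucasN (n + 2) = lucasN (n + 1) + lucasN n := fun n => rfl
  have e1 := h (k+4); have e2 := h (k+3); have e3 := h (k+2); have e4 := h (k+1)
  have e5 := h k
  simp only [show k+4+2 = k+6 from rfl, show k+4+1 = k+5 from rfl,
    show k+3+2 = k+5 from rfl, show k+3+1 = k+4 from rfl,
    show k+2+2 = k+4 from rfl, show k+2+1 = k+3 from rfl,
    show k+1+2 = k+3 from rfl, show k+1+1 = k+2 from rfl] at e1 e2 e3 e4 e5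
  omega

lemma fib_mod (k : ℕ) : Nat.fib k % 4 = Nat.fib (k % 6) % 4 := by
  induction k using Nat.strong_induction_on with
  | _ k ih =>
    by_cases h : k < 6
    · rw [Nat.mod_eq_of_lt h]
    · have e : k = (k - 6) + 6 := by omega
      rw [e, fib_period, ih (k - 6) (by omega), Nat.add_mod_right]

lemma lucasN_mod (k : ℕ) : lucasN k % 4 = lucasN (k % 6) % 4 := by
  induction k using Nat.strong_induction_on with
  | _ k ih =>
    by_cases h : k < 6
    · rw [Nat.mod_eq_of_lt h]
    · have e : k = (k - 6) + 6 := by omega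
      rw [e, lucasN_period, ih (k - 6) (by omega), Nat.add_mod_right]

theorem gcd_fib_lucas (k : ℕ) :
    (k % 6 = 3 → Int.gcd (Nat.fib (k + 3) : ℤ) (lucasNat k) = 4) ∧
    (k % 6 = 0 → Int.gcd (Nat.fib (k + 3) : ℤ) (lucasNat k) = 2) ∧
    (k % 6 ≠ 3 → k % 6 ≠ 0 → Int.gcd (Nat.fib (k + 3) : ℤ) (lucasNat k) = 1) := by
  have hg : Int.gcd (Nat.fib (k + 3) : ℤ) (lucasNat k)
      = Nat.gcd (Nat.fib (k + 3)) (lucasN k) := by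
    rw [lucasNat_eq, Int.gcd_natCast_natCast]
  rw [hg]
  obtain ⟨d, hd⟩ : ∃ d, Nat.gcd (Nat.fib (k + 3)) (lucasN k) = d := ⟨_, rfl⟩
  rw [hd]
  have hd4 : d ∣ 4 := hd ▸ gcd_dvd_four k
  have hdl : d ∣ Nat.fib (k + 3) := hd ▸ Nat.gcd_dvd_left _ _
  have hdr : d ∣ lucasN k := hd ▸ Nat.gcd_dvd_right _ _
  have hf := fib_mod (k + 3)
  have hl := lucasN_mod k
  have hdle : d ≤ 4 := Nat.le_of_dvd (by norm_num) hd4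
  have h6 : k % 6 = 0 ∨ k % 6 = 1 ∨ k % 6 = 2 ∨ k % 6 = 3 ∨ k % 6 = 4 ∨ k % 6 = 5 := by
    omega
  rcases h6 with h | h | h | h | h | h
  · -- k % 6 = 0 : F ≡ 2, L ≡ 2 mod 4 → gcd = 2
    rw [show (k+3) % 6 = 3 from by omega, show Nat.fib 3 % 4 = 2 from rfl] at hf
    rw [h, show lucasN 0 % 4 = 2 from rfl] at hl
    have h2d : (2 : ℕ) ∣ d := hd ▸ Nat.dvd_gcd (by omega) (by omega)
    refine ⟨fun hh => by omega, fun _ => ?_, fun _ hh => by omega⟩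
    interval_cases d <;> omega
  · -- k % 6 = 1 : L ≡ 1 mod 4 → gcd = 1
    rw [h, show lucasN 1 % 4 = 1 from rfl] at hl
    refine ⟨fun hh => by omega, fun hh => by omega, fun _ _ => ?_⟩
    interval_cases d <;> omega
  · -- k % 6 = 2 : L ≡ 3 mod 4
    rw [h, show lucasN 2 % 4 = 3 from rfl] at hl
    refine ⟨fun hh => by omega, fun hh => by omega, fun _ _ => ?_⟩
    interval_cases d <;> omega
  · -- k % 6 = 3 : F ≡ 0, L ≡ 0 mod 4 → gcd = 4
    rw [show (k+3) % 6 = 0 from by omega, show Nat.fib 0 % 4 = 0 from rfl] at hf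
    rw [h, show lucasN 3 % 4 = 0 from rfl] at hl
    refine ⟨fun _ => ?_, fun hh => by omega, fun hh _ => by omega⟩
    have h4 : (4 : ℕ) ∣ d := hd ▸ Nat.dvd_gcd (by omega) (by omega)
    exact Nat.dvd_antisymm hd4 h4
  · -- k % 6 = 4 : L ≡ 3 mod 4
    rw [h, show lucasN 4 % 4 = 3 from rfl] at hl
    refine ⟨fun hh => by omega, fun hh => by omega, fun _ _ => ?_⟩
    interval_cases d <;> omega
  · -- k % 6 = 5 : L ≡ 3 mod 4
    rw [h, show lucasN 5 % 4 = 3 from rfl] at hl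
    refine ⟨fun hh => by omega, fun hh => by omega, fun _ _ => ?_⟩
    interval_cases d <;> omega
end

section
/- Suppose n, y are integers, p is prime, F_{2n} + 2 = y^p, and q is an odd prime dividing y. Then q ≠ 3 and 6 is a quadratic residue modulo q; consequently q ≡ 1, 5, 19, or 23 (mod 24). -/
lemma lucasNat_eq_s8 (k : ℕ) : lucasNat k = 2 * (Nat.fib (k+1) : ℤ) - Nat.fib k := by
  induction k using Nat.twoStepInduction with
  | zero => simp [lucasNat]
  | one => simp [lucasNat]
  | more k ih1 ih2 =>
    rw [show lucasNat (k+2) = lucasNat (k+1) + lucasNat k from rfl, ih1, ih2]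
    simp only [show k+1+1 = k+2 from rfl, show k+2+1 = (k+1)+2 from rfl, Nat.fib_add_two]
    push_cast
    ring

lemma fib_id (k : ℕ) :
    (Nat.fib (k+1):ℤ)^2 - Nat.fib (k+1) * Nat.fib k - (Nat.fib k:ℤ) ^2 = (-1)^k := by
  induction k with
  | zero => simp
  | succ k ih =>
    rw [Nat.fib_add_two]
    push_cast
    push_cast at ih
    rw [pow_succ]
    linear_combination -ih

lemma nat_identity (k : ℕ) : lucasNat k ^ 2 - 5 * (Nat.fib k : ℤ)^2 = 4 * (-1)^k := by
  rw [lucasNat_eq_s8 k]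
  linear_combination 4 * fib_id k

lemma key_identity (n : ℤ) : lucasZ (2*n) ^ 2 = 5 * fibZ (2*n)^2 + 4 := by
  rcases le_or_gt 0 (2*n) with h2 | h2
  · rw [lucasZ, fibZ, if_pos h2, if_pos h2]
    have hk := nat_identity (2*n).toNat
    have he : Even (2*n).toNat := ⟨n.toNat, by omega⟩
    rw [he.neg_one_pow] at hk
    linarith
  · rw [lucasZ, fibZ, if_neg (not_le.2 h2), if_neg (not_le.2 h2)]
    have hk := nat_identity (2*n).natAbs
    have he : Even (2*n).natAbs := ⟨n.natAbs, by omega⟩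
    rw [he.neg_one_pow] at hk
    have h1 : ((-1:ℤ) ^ (2*n).natAbs) = 1 := he.neg_one_pow
    have hm : ((-1:ℤ) ^ ((2*n).natAbs + 1)) = -1 := by rw [pow_succ, h1, one_mul]
    rw [h1, hm]
    ring_nf
    ring_nf at hk
    linarith

lemma not_isSquare_two_zmod3 : ¬ IsSquare ((2:ℤ) : ZMod 3) := by
  rw [show ((2:ℤ) : ZMod 3) = 2 by norm_cast]
  decide

lemma isSquare_three_iff (q : ℕ) [Fact q.Prime] (hq2 : q ≠ 2) (hq3 : q ≠ 3) :
    IsSquare (3 : ZMod q) ↔ q % 12 = 1 ∨ q % 12 = 11 := by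
  have hq := (Fact.out : q.Prime)
  haveI : Fact (Nat.Prime 3) := ⟨by norm_num⟩
  have h3 : ((3:ℕ) : ZMod q) ≠ 0 := by
    rw [Ne, ZMod.natCast_eq_zero_iff]
    intro hd
    exact hq3 ((Nat.prime_dvd_prime_iff_eq hq (by norm_num)).mp hd)
  rw [show (3 : ZMod q) = ((3:ℕ) : ZMod q) by norm_cast, ← legendreSym.eq_one_iff' q h3]
  push_cast
  have hrec := legendreSym.quadratic_reciprocity' (p := 3) (q := q) (by norm_num) hq2
  norm_num at hrec
  have key : legendreSym q 3 = (-1:ℤ)^(q/2) * legendreSym 3 q := by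
    rw [hrec]
  have hq2' : q % 2 = 1 := hq.eq_two_or_odd.resolve_left hq2
  have hq3' : q % 3 ≠ 0 := by
    intro h0
    exact hq3 ((Nat.prime_dvd_prime_iff_eq (by norm_num) hq).mp (Nat.dvd_of_mod_eq_zero h0)).symm
  have hm := legendreSym.mod 3 (q:ℤ)
  push_cast at hm
  rcases (by omega : q % 3 = 1 ∨ q % 3 = 2) with h3q | h3q
  · have hv : legendreSym 3 (q:ℤ) = 1 := by
      rw [hm, show (q:ℤ) % 3 = 1 by omega, legendreSym.at_one]
    rcases (by omega : q % 4 = 1 ∨ q % 4 = 3) with h4 | h4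
    · rw [key, hv, ZMod.neg_one_pow_div_two_of_one_mod_four h4]
      norm_num; omega
    · rw [key, hv, ZMod.neg_one_pow_div_two_of_three_mod_four h4]
      constructor
      · intro hc; norm_num at hc
      · intro hc; omega
  · have hv : legendreSym 3 (q:ℤ) = -1 := by
      rw [hm, show (q:ℤ) % 3 = 2 by omega]
      exact (legendreSym.eq_neg_one_iff 3).mpr not_isSquare_two_zmod3
    rcases (by omega : q % 4 = 1 ∨ q % 4 = 3) with h4 | h4
    · rw [key, hv, ZMod.neg_one_pow_div_two_of_one_mod_four h4]
      constructor
      · intro hc; norm_num at hc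
      · intro hc; omega
    · rw [key, hv, ZMod.neg_one_pow_div_two_of_three_mod_four h4]
      norm_num; omega

theorem prime_divisor_of_y (n y : ℤ) (p : ℕ) (hp : p.Prime)
    (h : fibZ (2 * n) + 2 = y ^ p) (q : ℕ) (hq : q.Prime) (hq2 : q ≠ 2)
    (hdvd : (q : ℤ) ∣ y) :
    q ≠ 3 ∧ IsSquare (6 : ZMod q) ∧
      (q % 24 = 1 ∨ q % 24 = 5 ∨ q % 24 = 19 ∨ q % 24 = 23) := by
  haveI : Fact q.Prime := ⟨hq⟩
  have hF : fibZ (2*n) = y ^ p - 2 := by linarith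
  have key2 : lucasZ (2*n) ^ 2 = 5 * (y^p)^2 - 20 * y^p + 24 := by
    rw [key_identity n, hF]; ring
  have hpne : p ≠ 0 := hp.pos.ne'
  -- q ≠ 3
  have hq3 : q ≠ 3 := by
    intro h3
    subst h3
    obtain ⟨k, hk⟩ := hdvd
    have h9 : (9:ℤ) ∣ y ^ p := by
      have h1 : (9:ℤ) ∣ (3:ℤ)^p := by
        have := pow_dvd_pow (3:ℤ) hp.two_le
        norm_num at this ⊢
        exact this
      have : y ^ p = 3^p * k^p := by rw [hk]; push_cast; ring
      rw [this]
      exact h1.mul_right _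
    have h0 : ((y^p : ℤ) : ZMod 9) = 0 := by
      rw [ZMod.intCast_zmod_eq_zero_iff_dvd]
      exact_mod_cast h9
    have hc := congrArg (fun z : ℤ => (z : ZMod 9)) key2
    push_cast at hc h0
    rw [h0] at hc
    norm_num at hc
    exact (by decide : ∀ x : ZMod 9, x^2 ≠ 24) _ hc
  -- L^2 = 24 in ZMod q
  have hy : ((y : ℤ) : ZMod q) = 0 := by
    rw [ZMod.intCast_zmod_eq_zero_iff_dvd]
    exact_mod_cast hdvd
  have hc : ((lucasZ (2*n) : ℤ) : ZMod q)^2 = 24 := by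
    have hc := congrArg (fun z : ℤ => (z : ZMod q)) key2
    push_cast at hc
    rw [hy] at hc
    simp [zero_pow hpne] at hc
    exact hc
  -- 2 ≠ 0 in ZMod q
  have h2ne : (2 : ZMod q) ≠ 0 := by
    rw [show (2 : ZMod q) = ((2:ℕ) : ZMod q) by norm_cast, Ne,
      ZMod.natCast_eq_zero_iff]
    intro hd
    exact hq2 ((Nat.prime_dvd_prime_iff_eq hq (by norm_num)).mp hd)
  have hq3ne : (3 : ZMod q) ≠ 0 := by
    rw [show (3 : ZMod q) = ((3:ℕ) : ZMod q) by norm_cast, Ne,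
      ZMod.natCast_eq_zero_iff]
    intro hd
    exact hq3 ((Nat.prime_dvd_prime_iff_eq hq (by norm_num)).mp hd)
  have hsq6 : IsSquare (6 : ZMod q) := by
    refine ⟨((lucasZ (2*n) : ℤ) : ZMod q) * 2⁻¹, ?_⟩
    calc (6:ZMod q) = 6 * (2*2⁻¹) * (2*2⁻¹) := by rw [mul_inv_cancel₀ h2ne]; ring
      _ = 24 * 2⁻¹ * 2⁻¹ := by ring
      _ = ((lucasZ (2*n) : ℤ) : ZMod q)^2 * 2⁻¹ * 2⁻¹ := by rw [hc]
      _ = _ := by ring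
  refine ⟨hq3, hsq6, ?_⟩
  -- mod 24
  have hq2' : q % 2 = 1 := hq.eq_two_or_odd.resolve_left hq2
  have hq3' : q % 3 ≠ 0 := by
    intro h0
    exact hq3 ((Nat.prime_dvd_prime_iff_eq (by norm_num) hq).mp (Nat.dvd_of_mod_eq_zero h0)).symm
  have c2 : ((2:ℤ) : ZMod q) = (2 : ZMod q) := by norm_cast
  have c3 : ((3:ℤ) : ZMod q) = (3 : ZMod q) := by norm_cast
  have c6 : ((6:ℤ) : ZMod q) = (6 : ZMod q) := by norm_cast
  have h6ne : ((6:ℤ) : ZMod q) ≠ 0 := by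
    rw [show ((6:ℤ) : ZMod q) = (2 : ZMod q) * 3 by rw [← c2, ← c3]; push_cast; ring]
    exact mul_ne_zero h2ne hq3ne
  have h61 : legendreSym q 6 = 1 := by
    rw [legendreSym.eq_one_iff q h6ne, c6]
    exact hsq6
  have hmul : legendreSym q 6 = legendreSym q 2 * legendreSym q 3 := by
    rw [show (6:ℤ) = 2 * 3 by norm_num, legendreSym.mul]
  have h2or := legendreSym.eq_one_or_neg_one q (a := 2) (by rw [c2]; exact h2ne)
  have h3or := legendreSym.eq_one_or_neg_one q (a := 3) (by rw [c3]; exact hq3ne)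
  have hs2iff : legendreSym q 2 = 1 ↔ (q % 8 = 1 ∨ q % 8 = 7) := by
    rw [legendreSym.eq_one_iff q (by rw [c2]; exact h2ne), c2]
    exact ZMod.exists_sq_eq_two_iff hq2
  have hs3iff : legendreSym q 3 = 1 ↔ (q % 12 = 1 ∨ q % 12 = 11) := by
    rw [legendreSym.eq_one_iff q (by rw [c3]; exact hq3ne), c3]
    exact isSquare_three_iff q hq2 hq3
  rcases h2or with h2v | h2v <;> rcases h3or with h3v | h3v
  · have e2 := hs2iff.mp h2v
    have e3 := hs3iff.mp h3v
    omega
  · rw [hmul, h2v, h3v] at h61; norm_num at h61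
  · rw [hmul, h2v, h3v] at h61; norm_num at h61
  · have e2 : ¬ (q % 8 = 1 ∨ q % 8 = 7) := fun hh => by
      have := hs2iff.mpr hh; omega
    have e3 : ¬ (q % 12 = 1 ∨ q % 12 = 11) := fun hh => by
      have := hs3iff.mpr hh; omega
    omega
end

section
/- Suppose n, y are integers, p is prime, and F_{2n} + 2 = y^p. Then n ≡ 2, 4, 7, 8, 10, or 11 (mod 12). -/
lemma fib_per36 : ∀ a : ℕ, (Nat.fib (a + 24) : ℤ) % 36 = (Nat.fib a : ℤ) % 36 := by
  intro a
  induction a using Nat.twoStepInduction with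
  | zero => decide
  | one => decide
  | more a ih1 ih2 =>
    have h1 : Nat.fib (a + 2 + 24) = Nat.fib (a + 24) + Nat.fib (a + 1 + 24) := by
      rw [show a + 2 + 24 = (a + 24) + 2 by ring, Nat.fib_add_two]
    have h2 : Nat.fib (a + 2) = Nat.fib a + Nat.fib (a + 1) := Nat.fib_add_two
    rw [h1, h2]
    push_cast
    omega

lemma fib_per36' : ∀ (q a : ℕ), (Nat.fib (a + 24 * q) : ℤ) % 36 = (Nat.fib a : ℤ) % 36 := by
  intro q
  induction q with
  | zero => simp
  | succ q ih =>
    intro a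
    have := fib_per36 (a + 24 * q)
    rw [show a + 24 * (q + 1) = a + 24 * q + 24 by ring]
    rw [this, ih]

set_option maxRecDepth 4000 in
lemma fib_neg_pair : ∀ s t : Fin 24, s.val % 2 = 0 → (s.val + t.val) % 24 = 0 →
    (-(Nat.fib s.val : ℤ)) % 36 = (Nat.fib t.val : ℤ) % 36 := by decide

lemma keyK (n : ℤ) : fibZ (2 * n) % 36 = (Nat.fib (2 * n % 24).toNat : ℤ) % 36 := by
  rcases le_or_gt 0 n with hn | hn
  · rw [fibZ, if_pos (by omega)]
    have h1 : (2 * n).toNat = (2 * n % 24).toNat + 24 * ((2 * n).toNat / 24) := by omega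
    rw [h1, fib_per36']
  · rw [fibZ, if_neg (by omega)]
    have hodd : Odd ((2 * n).natAbs + 1) := ⟨(-n).toNat, by omega⟩
    rw [hodd.neg_one_pow, neg_one_mul]
    obtain ⟨m, hm⟩ : ∃ m, m = (2 * n).natAbs := ⟨_, rfl⟩
    obtain ⟨t, ht⟩ : ∃ t, t = (2 * n % 24).toNat := ⟨_, rfl⟩
    rw [← hm, ← ht]
    have hred : (Nat.fib m : ℤ) % 36 = (Nat.fib (m % 24) : ℤ) % 36 := by
      conv_lhs => rw [show m = m % 24 + 24 * (m / 24) by omega]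
      rw [fib_per36']
    have hs2 : m % 24 % 2 = 0 := by omega
    have hst : (m % 24 + t) % 24 = 0 := by omega
    have ht24 : t < 24 := by omega
    have := fib_neg_pair ⟨m % 24, by omega⟩ ⟨t, ht24⟩ hs2 hst
    simp only at this
    omega

lemma pow_mod4_ne_two (y : ℤ) (p : ℕ) (hp : p.Prime) : y ^ p % 4 ≠ 2 := by
  rcases Int.even_or_odd y with ⟨k, hk⟩ | hodd
  · have h4 : (4 : ℤ) ∣ y ^ p := by
      have h2 : (2 : ℤ) ^ 2 ∣ 2 ^ p := pow_dvd_pow 2 hp.two_le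
      have : (2 : ℤ) ^ p ∣ y ^ p := by
        rw [hk, show k + k = 2 * k by ring, mul_pow]
        exact dvd_mul_right _ _
      calc (4 : ℤ) = 2 ^ 2 := by norm_num
        _ ∣ 2 ^ p := h2
        _ ∣ y ^ p := this
    obtain ⟨c, hc⟩ := h4
    omega
  · have := hodd.pow (n := p)
    obtain ⟨c, hc⟩ := this
    omega

lemma pow_mod9_ne_three (y : ℤ) (p : ℕ) (hp : p.Prime) : y ^ p % 9 ≠ 3 := by
  intro hmod
  have h3 : (3 : ℤ) ∣ y ^ p := by
    obtain ⟨c, hc⟩ : ∃ c, y ^ p = 9 * c + 3 := ⟨y ^ p / 9, by omega⟩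
    exact ⟨3 * c + 1, by omega⟩
  have hpr : Prime (3 : ℤ) := by norm_num
  have hy : (3 : ℤ) ∣ y := hpr.dvd_of_dvd_pow h3
  have h9 : (9 : ℤ) ∣ y ^ p := by
    obtain ⟨k, hk⟩ := hy
    have h2 : (3 : ℤ) ^ 2 ∣ 3 ^ p := pow_dvd_pow 3 hp.two_le
    have : (3 : ℤ) ^ p ∣ y ^ p := by rw [hk, mul_pow]; exact dvd_mul_right _ _
    calc (9 : ℤ) = 3 ^ 2 := by norm_num
      _ ∣ 3 ^ p := h2
      _ ∣ y ^ p := this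
  obtain ⟨c, hc⟩ := h9
  omega

theorem n_mod_twelve (n y : ℤ) (p : ℕ) (hp : p.Prime) (h : fibZ (2 * n) + 2 = y ^ p) :
    n % 12 = 2 ∨ n % 12 = 4 ∨ n % 12 = 7 ∨ n % 12 = 8 ∨ n % 12 = 10 ∨ n % 12 = 11 := by
  by_contra hcon
  push_neg at hcon
  have hK := keyK n
  have ht : (2 * n % 24).toNat = 2 * (n % 12).toNat := by omega
  have hr : n % 12 = 0 ∨ n % 12 = 1 ∨ n % 12 = 3 ∨ n % 12 = 5 ∨ n % 12 = 6 ∨ n % 12 = 9 := by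
    omega
  have h4 := pow_mod4_ne_two y p hp
  have h9 := pow_mod9_ne_three y p hp
  have hy : y ^ p % 36 = (fibZ (2 * n) + 2) % 36 := by rw [h]
  rcases hr with h' | h' | h' | h' | h' | h' <;> rw [ht, h'] at hK
  · have : ((Nat.fib (2 * Int.toNat 0) : ℤ)) % 36 = 0 := by decide
    omega
  · have : ((Nat.fib (2 * Int.toNat 1) : ℤ)) % 36 = 1 := by decide
    omega
  · have : ((Nat.fib (2 * Int.toNat 3) : ℤ)) % 36 = 8 := by decide
    omega
  · have : ((Nat.fib (2 * Int.toNat 5) : ℤ)) % 36 = 19 := by decide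
    omega
  · have : ((Nat.fib (2 * Int.toNat 6) : ℤ)) % 36 = 0 := by decide
    omega
  · have : ((Nat.fib (2 * Int.toNat 9) : ℤ)) % 36 = 28 := by decide
    omega
end

section
/- The only solutions to F_{2n} + 2 = ± 5^m with n an integer and m a nonnegative integer are F_{−4} + 2 = −1, F_{−2} + 2 = 1, and F_4 + 2 = 5. -/
set_option maxRecDepth 10000

open Nat (fib)


lemma fib99Z : (fib 99 : ℤ) ≡ 1 [ZMOD 75025] := by
  have h : (fib 99 : ℤ) ≡ (1:ℕ) [ZMOD (75025:ℕ)] :=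
    Int.natCast_modEq_iff.mpr (by decide)
  exact_mod_cast h

lemma fib100Z : (fib 100 : ℤ) ≡ 0 [ZMOD 75025] := by
  have h : (fib 100 : ℤ) ≡ (0:ℕ) [ZMOD (75025:ℕ)] :=
    Int.natCast_modEq_iff.mpr (by decide)
  exact_mod_cast h

lemma fib_per (q r : ℕ) : (fib (100 * q + r) : ℤ) ≡ fib r [ZMOD 75025] := by
  induction q with
  | zero => simp
  | succ q ih =>
    have e : 100 * (q + 1) + r = (100 * q + r) + 99 + 1 := by ring
    rw [e, Nat.fib_add]
    push_cast
    calc ((fib (100*q+r) : ℤ) * fib 99 + fib (100*q+r+1) * fib 100)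
        ≡ (fib (100*q+r) : ℤ) * 1 + fib (100*q+r+1) * 0 [ZMOD 75025] :=
          Int.ModEq.add ((Int.ModEq.refl _).mul fib99Z) ((Int.ModEq.refl _).mul fib100Z)
      _ = (fib (100*q+r) : ℤ) := by ring
      _ ≡ fib r [ZMOD 75025] := ih

lemma fib_mod100 (K : ℕ) : (fib K : ℤ) ≡ fib (K % 100) [ZMOD 75025] := by
  conv_lhs => rw [← Nat.div_add_mod K 100]
  exact fib_per _ _

lemma pow250_one (m : ℕ) (δ : ℤ) (hδ : δ = 1 ∨ δ = -1) :
    (δ * 5 ^ m) ^ 250 ≡ 1 [ZMOD 3001] := by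
  have h5 : (5 : ℤ) ^ 250 ≡ 1 [ZMOD 3001] := by
    have h : ((5^250 : ℕ) : ℤ) ≡ (1:ℕ) [ZMOD (3001:ℕ)] :=
      Int.natCast_modEq_iff.mpr (by decide)
    exact_mod_cast h
  have hδ250 : δ ^ 250 = 1 := by rcases hδ with h | h <;> simp [h]
  calc (δ * 5 ^ m) ^ 250 = δ ^ 250 * ((5:ℤ) ^ m) ^ 250 := mul_pow _ _ _
    _ = ((5:ℤ) ^ 250) ^ m := by
        rw [hδ250, one_mul, ← pow_mul, ← pow_mul, Nat.mul_comm]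
    _ ≡ 1 ^ m [ZMOD 3001] := h5.pow m
    _ = 1 := one_pow m

/-- The main arithmetic lemma: if ε·F_K + 2 = δ·5^m with K even, then m ≤ 1. -/
lemma key (K : ℕ) (hK : K % 2 = 0) (m : ℕ) (ε δ : ℤ)
    (hε : ε = 1 ∨ ε = -1) (hδ : δ = 1 ∨ δ = -1)
    (h : ε * (fib K : ℤ) + 2 = δ * 5 ^ m) : m ≤ 1 := by
  by_contra hm
  push_neg at hm
  obtain ⟨m', rfl⟩ : ∃ m', m = m' + 2 := ⟨m - 2, by omega⟩
  have hper : (fib K : ℤ) ≡ fib (K % 100) [ZMOD 75025] := fib_mod100 K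
  obtain ⟨r, hrdef⟩ : ∃ r, K % 100 = r := ⟨_, rfl⟩
  rw [hrdef] at hper
  have hrlt : r < 100 := by omega
  have hreven : r % 2 = 0 := by omega
  have h25 : (25 : ℤ) ∣ ε * (fib r : ℤ) + 2 := by
    have h1 : ε * (fib K : ℤ) + 2 ≡ ε * (fib r : ℤ) + 2 [ZMOD 25] :=
      Int.ModEq.add (Int.ModEq.mul (Int.ModEq.refl _)
        (hper.of_dvd (by norm_num))) (Int.ModEq.refl _)
    have h2 : (25 : ℤ) ∣ ε * (fib K : ℤ) + 2 := by
      rw [h]; exact ⟨δ * 5 ^ m', by ring⟩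
    exact (Int.modEq_zero_iff_dvd).mp (((Int.modEq_zero_iff_dvd).mpr h2).symm.trans h1).symm
  have h3001 : ε * (fib r : ℤ) + 2 ≡ δ * 5 ^ (m' + 2) [ZMOD 3001] := by
    have h1 : ε * (fib K : ℤ) + 2 ≡ ε * (fib r : ℤ) + 2 [ZMOD 3001] :=
      Int.ModEq.add (Int.ModEq.mul (Int.ModEq.refl _)
        (hper.of_dvd (by norm_num))) (Int.ModEq.refl _)
    exact (h1.symm.trans (by rw [h]))
  have hpow : (ε * (fib r : ℤ) + 2) ^ 250 ≡ 1 [ZMOD 3001] :=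
    (h3001.pow 250).trans (pow250_one _ δ hδ)
  rcases hε with hε | hε
  · subst hε
    have hd : 25 ∣ fib r + 2 := by
      have : ((25:ℕ):ℤ) ∣ ((fib r + 2 : ℕ) : ℤ) := by push_cast; simpa using h25
      exact_mod_cast this
    have hr64 : r = 64 ∨ r = 86 :=
      (by decide : ∀ r < 100, r % 2 = 0 → 25 ∣ fib r + 2 → r = 64 ∨ r = 86) r hrlt hreven hd
    have hpow' : ((fib r + 2 : ℕ) : ℤ) ^ 250 ≡ 1 [ZMOD 3001] := by
      push_cast; simpa using hpow
    have hnat : (fib r + 2) ^ 250 ≡ 1 [MOD 3001] := by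
      apply Int.natCast_modEq_iff.mp
      exact_mod_cast hpow'
    rcases hr64 with rfl | rfl
    · exact (by decide : ¬ ((fib 64 + 2) ^ 250 ≡ 1 [MOD 3001])) hnat
    · exact (by decide : ¬ ((fib 86 + 2) ^ 250 ≡ 1 [MOD 3001])) hnat
  · subst hε
    have hd : 2 ≡ fib r [MOD 25] := by
      rw [Nat.modEq_iff_dvd]
      have e : (-1 : ℤ) * (fib r : ℤ) + 2 = -((fib r : ℤ) - 2) := by ring
      rw [e] at h25
      simpa using (dvd_neg.mp h25)
    have hr14 : r = 14 ∨ r = 36 :=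
      (by decide : ∀ r < 100, r % 2 = 0 → 2 ≡ fib r [MOD 25] → r = 14 ∨ r = 36)
        r hrlt hreven hd
    have hfge : 2 ≤ fib r := by rcases hr14 with rfl | rfl <;> decide
    have heq : (-1 : ℤ) * (fib r : ℤ) + 2 = -((fib r - 2 : ℕ) : ℤ) := by
      push_cast [hfge]; ring
    rw [heq] at hpow
    have hpow' : ((fib r - 2 : ℕ) : ℤ) ^ 250 ≡ 1 [ZMOD 3001] := by
      rwa [show (-((fib r - 2 : ℕ) : ℤ)) ^ 250 = ((fib r - 2 : ℕ) : ℤ) ^ 250 from by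
        rw [neg_pow]; norm_num] at hpow
    have hnat : (fib r - 2) ^ 250 ≡ 1 [MOD 3001] := by
      apply Int.natCast_modEq_iff.mp
      exact_mod_cast hpow'
    rcases hr14 with rfl | rfl
    · exact (by decide : ¬ ((fib 14 - 2) ^ 250 ≡ 1 [MOD 3001])) hnat
    · exact (by decide : ¬ ((fib 36 - 2) ^ 250 ≡ 1 [MOD 3001])) hnat


lemma fib_bound {K B : ℕ} (hB : 8 ≤ fib B) (h : fib K < 8) : K < B := by
  by_contra hb
  push_neg at hb
  exact absurd (le_trans hB (Nat.fib_mono hb)) (by omega)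

lemma fib_eq_three {K : ℕ} (h : fib K = 3) : K = 4 := by
  have hb : K < 6 := fib_bound (by decide) (by omega)
  revert h; interval_cases K <;> decide

lemma fib_eq_one_even {K : ℕ} (h : fib K = 1) (he : K % 2 = 0) : K = 2 := by
  have hb : K < 6 := fib_bound (by decide) (by omega)
  revert h he; interval_cases K <;> decide

lemma fib_ne_seven (K : ℕ) : fib K ≠ 7 := by
  intro h
  have hb : K < 6 := fib_bound (by decide) (by omega)
  revert h; interval_cases K <;> decide

theorem fib_even_plus_two_power_of_five (n : ℤ) (m : ℕ)
    (h : fibZ (2 * n) + 2 = 5 ^ m ∨ fibZ (2 * n) + 2 = -(5 ^ m : ℤ)) :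
    (n = -2 ∧ m = 0) ∨ (n = -1 ∧ m = 0) ∨ (n = 2 ∧ m = 1) := by
  have hδ : ∃ δ : ℤ, (δ = 1 ∨ δ = -1) ∧ fibZ (2 * n) + 2 = δ * 5 ^ m := by
    rcases h with h | h
    · exact ⟨1, Or.inl rfl, by linarith⟩
    · exact ⟨-1, Or.inr rfl, by linarith⟩
  obtain ⟨δ, hδ1, heq⟩ := hδ
  by_cases hn : 0 ≤ n
  · have h0 : (0:ℤ) ≤ 2 * n := by omega
    rw [fibZ, if_pos h0] at heq
    set K := (2 * n).toNat with hKdef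
    have hKeven : K % 2 = 0 := by omega
    have hkey : 1 * (fib K : ℤ) + 2 = δ * 5 ^ m := by linarith
    have hm : m ≤ 1 := key K hKeven m 1 δ (Or.inl rfl) hδ1 hkey
    interval_cases m
    · rcases hδ1 with rfl | rfl
      · exfalso
        have : (fib K : ℤ) = -1 := by linarith [heq]; 
        have := Int.natCast_nonneg (fib K); omega
      · exfalso
        have : (fib K : ℤ) = -3 := by push_cast at heq ⊢; linarith
        have := Int.natCast_nonneg (fib K); omega
    · rcases hδ1 with rfl | rfl
      · have hF : (fib K : ℤ) = 3 := by push_cast at heq ⊢; linarith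
        have hF' : fib K = 3 := by exact_mod_cast hF
        have : K = 4 := fib_eq_three hF'
        right; right
        constructor
        · omega
        · rfl
      · exfalso
        have : (fib K : ℤ) = -7 := by push_cast at heq ⊢; linarith
        have := Int.natCast_nonneg (fib K); omega
  · have h0 : ¬ (0:ℤ) ≤ 2 * n := by omega
    rw [fibZ, if_neg h0] at heq
    set K := (2 * n).natAbs with hKdef
    have hKeven : K % 2 = 0 := by omega
    have hsign : ((-1 : ℤ)) ^ (K + 1) = -1 := Odd.neg_one_pow ⟨K / 2, by omega⟩
    rw [hsign] at heq
    have hkey : (-1 : ℤ) * (fib K : ℤ) + 2 = δ * 5 ^ m := by linarith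
    have hm : m ≤ 1 := key K hKeven m (-1) δ (Or.inr rfl) hδ1 hkey
    interval_cases m
    · rcases hδ1 with rfl | rfl
      · have hF : (fib K : ℤ) = 1 := by linarith
        have hF' : fib K = 1 := by exact_mod_cast hF
        have : K = 2 := fib_eq_one_even hF' hKeven
        right; left; exact ⟨by omega, rfl⟩
      · have hF : (fib K : ℤ) = 3 := by linarith
        have hF' : fib K = 3 := by exact_mod_cast hF
        have : K = 4 := fib_eq_three hF'
        left; exact ⟨by omega, rfl⟩
    · rcases hδ1 with rfl | rfl
      · exfalso
        have : (fib K : ℤ) = -3 := by push_cast at hkey ⊢; linarith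
        have := Int.natCast_nonneg (fib K); omega
      · exfalso
        have hF : (fib K : ℤ) = 7 := by push_cast at hkey ⊢; linarith
        exact fib_ne_seven K (by exact_mod_cast hF)
end
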